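/- arXiv:math/0604551 — 3 statements merged into one kernel-verified Lean document; each statement's English description precedes it below -/
import Mathlib

section
/- Let ψ be a real random variable and for each t ≥ 0 let Q_t, M_t, ψ_t be random variables on the same probability space such that: (1) M_t ≠ 0 almost surely; (2) ψ_t is independent of the pair (Q_t, M_t); (3) ψ = Q_t + M_t·ψ_t almost surely; (4) ψ_t has the same distribution as ψ; (5) Q_t converges to ψ in probability as t → ∞. Then the distribution of ψ has an atom if and only if ψ is almost surely equal to a constant. -/
open MeasureTheory ProbabilityTheory Filter
open scoped ENNReal

lemma key0 {Ω : Type*} [MeasurableSpace Ω] (P : Measure Ω) [IsProbabilityMeasure P]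
    (X : Ω → ℝ) (Y : Ω → ℝ × ℝ) (hX : Measurable X) (hY : Measurable Y)
    (hind : IndepFun Y X P) (hY0 : ∀ᵐ ω ∂P, (Y ω).2 ≠ 0)
    (a₀ : ℝ) (β : ℝ≥0∞)
    (hle : ∀ x : ℝ, Measure.map X P {x} ≤ β)
    (hβ : P {ω | (Y ω).1 + (Y ω).2 * X ω = a₀} = β) :
    ∀ᵐ ω ∂P, Measure.map X P {((a₀ - (Y ω).1) / (Y ω).2)} = β := by
  set μ := Measure.map X P with hμdef
  set ν := Measure.map Y P with hνdef
  have hμprob : IsProbabilityMeasure μ := Measure.isProbabilityMeasure_map hX.aemeasurable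
  have hνprob : IsProbabilityMeasure ν := Measure.isProbabilityMeasure_map hY.aemeasurable
  have hβ1 : β ≤ 1 := hβ ▸ prob_le_one
  have hjoint : Measure.map (fun ω => (Y ω, X ω)) P = ν.prod μ :=
    (indepFun_iff_map_prod_eq_prod_map_map hY.aemeasurable hX.aemeasurable).mp hind
  set E : Set ((ℝ × ℝ) × ℝ) := {p | p.1.1 + p.1.2 * p.2 = a₀} with hEdef
  have hE : MeasurableSet E := by
    have hm : Measurable fun p : (ℝ × ℝ) × ℝ => p.1.1 + p.1.2 * p.2 :=
      (measurable_fst.fst.add (measurable_fst.snd.mul measurable_snd))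
    exact hm (measurableSet_singleton a₀)
  have hνE : (ν.prod μ) E = β := by
    rw [← hjoint, Measure.map_apply (hY.prodMk hX) hE]
    exact hβ
  have hgmeas : Measurable fun qm : ℝ × ℝ => μ (Prod.mk qm ⁻¹' E) :=
    measurable_measure_prodMk_left hE
  have hprod : ∫⁻ qm, μ (Prod.mk qm ⁻¹' E) ∂ν = β := by
    rw [← Measure.prod_apply hE, hνE]
  have hν0 : ∀ᵐ qm : ℝ × ℝ ∂ν, qm.2 ≠ 0 := by
    rw [hνdef]
    exact (ae_map_iff hY.aemeasurable
      ((measurable_snd (measurableSet_singleton (0:ℝ))).compl)).mpr hY0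
  have hslice : ∀ qm : ℝ × ℝ, qm.2 ≠ 0 →
      Prod.mk qm ⁻¹' E = {((a₀ - qm.1) / qm.2)} := by
    intro qm hm
    ext x
    simp only [hEdef, Set.mem_preimage, Set.mem_setOf_eq, Set.mem_singleton_iff]
    rw [eq_div_iff hm]
    constructor <;> intro h <;> nlinarith [h]
  have hgle : ∀ᵐ qm ∂ν, μ (Prod.mk qm ⁻¹' E) ≤ β := by
    filter_upwards [hν0] with qm hm
    rw [hslice qm hm]; exact hle _
  have hint_ne : ∫⁻ qm, μ (Prod.mk qm ⁻¹' E) ∂ν ≠ ⊤ := by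
    rw [hprod]; exact (lt_of_le_of_lt hβ1 ENNReal.one_lt_top).ne
  have hsub : ∫⁻ qm, (β - μ (Prod.mk qm ⁻¹' E)) ∂ν = 0 := by
    rw [lintegral_sub hgmeas hint_ne hgle, hprod, lintegral_const]
    simp
  have hae : ∀ᵐ qm ∂ν, β - μ (Prod.mk qm ⁻¹' E) = 0 := by
    have := (lintegral_eq_zero_iff (measurable_const.sub hgmeas)).mp hsub
    filter_upwards [this] with qm h
    simpa using h
  have hfin : ∀ᵐ qm : ℝ × ℝ ∂ν, μ {((a₀ - qm.1) / qm.2)} = β := by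
    filter_upwards [hν0, hgle, hae] with qm hm h1 h2
    rw [← hslice qm hm]
    exact le_antisymm h1 (tsub_eq_zero_iff_le.mp h2)
  set E' : Set ((ℝ × ℝ) × ℝ) := {p | p.2 = (a₀ - p.1.1) / p.1.2} with hE'def
  have hE' : MeasurableSet E' :=
    measurableSet_eq_fun measurable_snd
      ((measurable_const.sub measurable_fst.fst).div measurable_fst.snd)
  have hg'meas : Measurable fun qm : ℝ × ℝ => μ (Prod.mk qm ⁻¹' E') :=
    measurable_measure_prodMk_left hE'
  have hslice' : ∀ qm : ℝ × ℝ, Prod.mk qm ⁻¹' E' = {((a₀ - qm.1) / qm.2)} := by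
    intro qm; ext x
    simp [hE'def, Set.mem_preimage]
  have hA : MeasurableSet {qm : ℝ × ℝ | μ {((a₀ - qm.1) / qm.2)} = β} := by
    have : {qm : ℝ × ℝ | μ {((a₀ - qm.1) / qm.2)} = β}
        = (fun qm : ℝ × ℝ => μ (Prod.mk qm ⁻¹' E')) ⁻¹' {β} := by
      ext qm; simp [hslice' qm]
    rw [this]
    exact hg'meas (measurableSet_singleton β)
  exact (ae_map_iff hY.aemeasurable hA).mp hfin

/-- Lemma 2.1 (Grincevičius-type): if `ψ = Q_t + M_t ψ_t` with `ψ_t` independent of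
`(Q_t, M_t)`, distributed as `ψ`, `M_t ≠ 0` a.s., and `Q_t → ψ` in probability,
then `ψ` has an atom iff `ψ` is a.s. constant. -/
theorem stmt0 {Ω : Type*} [MeasurableSpace Ω] (P : Measure Ω) [IsProbabilityMeasure P]
    (ψ : Ω → ℝ) (Q M ψt : ℝ → Ω → ℝ)
    (hψ : Measurable ψ) (hQ : ∀ t, Measurable (Q t)) (hM : ∀ t, Measurable (M t))
    (hψt : ∀ t, Measurable (ψt t))
    (hM0 : ∀ t, 0 ≤ t → ∀ᵐ ω ∂P, M t ω ≠ 0)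
    (hind : ∀ t, 0 ≤ t → IndepFun (ψt t) (fun ω => (Q t ω, M t ω)) P)
    (heq : ∀ t, 0 ≤ t → ∀ᵐ ω ∂P, ψ ω = Q t ω + M t ω * ψt t ω)
    (hdist : ∀ t, 0 ≤ t → Measure.map (ψt t) P = Measure.map ψ P)
    (hconv : ∀ δ : ℝ, 0 < δ →
      Tendsto (fun t => P {ω | δ ≤ |Q t ω - ψ ω|}) atTop (nhds 0)) :
    (∃ a : ℝ, 0 < P {ω | ψ ω = a}) ↔ ∃ c : ℝ, ∀ᵐ ω ∂P, ψ ω = c := by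
  constructor
  · rintro ⟨a, ha⟩
    set μ := Measure.map ψ P with hμdef
    have hμprob : IsProbabilityMeasure μ := Measure.isProbabilityMeasure_map hψ.aemeasurable
    have hPa : ∀ x : ℝ, P {ω | ψ ω = x} = μ {x} := by
      intro x
      rw [hμdef, Measure.map_apply hψ (measurableSet_singleton x)]
      rfl
    -- helper: a.e. equality from smallness of all tails
    have htail : ∀ g : Ω → ℝ, (∀ δ : ℝ, 0 < δ → P {ω | δ ≤ |g ω|} = 0) →
        ∀ᵐ ω ∂P, g ω = 0 := by
      intro g hg
      have h0 : P {ω | g ω ≠ 0} = 0 := by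
        have hsub : {ω | g ω ≠ 0} ⊆ ⋃ n : ℕ, {ω | 1 / (n + 1 : ℝ) ≤ |g ω|} := by
          intro ω hω
          obtain ⟨n, hn⟩ := exists_nat_one_div_lt (abs_pos.mpr hω)
          exact Set.mem_iUnion.mpr ⟨n, hn.le⟩
        exact measure_mono_null hsub
          (measure_iUnion_null fun n => hg _ (by positivity))
      exact h0
    by_cases hzero : ∀ ε : ℝ, 0 < ε → P {ω | ε ≤ |ψ ω|} = 0
    · exact ⟨0, htail ψ hzero⟩
    push_neg at hzero
    obtain ⟨ε, hε, hc⟩ := hzero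
    set c := P {ω | ε ≤ |ψ ω|} with hcdef
    -- maximal atom
    have hβ₀ : 0 < μ {a} := hPa a ▸ ha
    have hT : Set.Finite {x : ℝ | μ {a} ≤ μ {x}} :=
      Measure.finite_const_le_meas_of_disjoint_iUnion μ hβ₀
        (fun x => measurableSet_singleton x)
        (fun x y hxy => by
          simpa [Function.onFun] using Set.disjoint_singleton.mpr hxy)
        (by rw [Set.iUnion_of_singleton]; exact measure_ne_top μ _)
    obtain ⟨a₀, ha₀T, ha₀max⟩ :=
      Set.exists_max_image _ (fun x => μ {x}) hT ⟨a, by simp⟩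
    set β := μ {a₀} with hβdef
    have hle : ∀ x : ℝ, μ {x} ≤ β := by
      intro x
      by_cases hx : μ {a} ≤ μ {x}
      · exact ha₀max x hx
      · exact ((lt_of_not_ge hx).le).trans ha₀T
    -- bound on the finite set
    obtain ⟨K₀, hK₀⟩ := (hT.image abs).bddAbove
    set K : ℝ := max K₀ 1 with hKdef
    have hK1 : 0 < K := lt_of_lt_of_le one_pos (le_max_right _ _)
    have hK : ∀ x : ℝ, μ {a} ≤ μ {x} → |x| ≤ K := by
      intro x hx
      exact le_trans (hK₀ (Set.mem_image_of_mem abs hx)) (le_max_left _ _)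
    -- step 2: a.e. (a₀ - Q)/M is a β-atom
    have hstep2 : ∀ t, 0 ≤ t →
        ∀ᵐ ω ∂P, μ {((a₀ - Q t ω) / M t ω)} = β := by
      intro t ht
      have hsets : ({ω | Q t ω + M t ω * ψt t ω = a₀} : Set Ω)
          =ᵐ[P] {ω | ψ ω = a₀} := by
        refine eventuallyEq_set.mpr ?_
        filter_upwards [heq t ht] with ω h
        rw [h]
      have h1 : P {ω | Q t ω + M t ω * ψt t ω = a₀} = β := by
        rw [measure_congr hsets, hPa a₀]
      have h2 := key0 P (ψt t) (fun ω => (Q t ω, M t ω)) (hψt t)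
        ((hQ t).prodMk (hM t)) (hind t ht).symm (hM0 t ht) a₀ β
        (fun x => by rw [hdist t ht]; exact hle x) h1
      rw [hdist t ht] at h2
      exact h2
    -- step 3: M_t → 0 in probability
    have hMψ : ∀ t, 0 ≤ t → ∀ η : ℝ, 0 < η →
        c * P {ω | η ≤ |M t ω|} ≤ P {ω | ε * η ≤ |Q t ω - ψ ω|} := by
      intro t ht η hη
      have habsε : MeasurableSet {x : ℝ | ε ≤ |x|} :=
        measurableSet_le measurable_const measurable_abs
      have habsη : MeasurableSet {x : ℝ | η ≤ |x|} :=
        measurableSet_le measurable_const measurable_abs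
      have hindM : IndepFun (ψt t) (M t) P :=
        (hind t ht).comp measurable_id measurable_snd
      have hprod := hindM.measure_inter_preimage_eq_mul
        {x | ε ≤ |x|} {x | η ≤ |x|} habsε habsη
      have hψtc : P ((ψt t) ⁻¹' {x | ε ≤ |x|}) = c := by
        rw [← Measure.map_apply (hψt t) habsε, hdist t ht,
          Measure.map_apply hψ habsε]
        rfl
      have hsubset : (ψt t) ⁻¹' {x | ε ≤ |x|} ∩ (M t) ⁻¹' {x | η ≤ |x|}
          ⊆ {ω | ε * η ≤ |M t ω * ψt t ω|} := by
        rintro ω ⟨h1, h2⟩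
        simp only [Set.mem_preimage, Set.mem_setOf_eq] at h1 h2 ⊢
        calc ε * η ≤ |ψt t ω| * |M t ω| :=
              mul_le_mul h1 h2 hη.le (abs_nonneg _)
        _ = |M t ω * ψt t ω| := by rw [abs_mul, mul_comm]
      have hsets2 : ({ω | ε * η ≤ |M t ω * ψt t ω|} : Set Ω)
          =ᵐ[P] {ω | ε * η ≤ |Q t ω - ψ ω|} := by
        refine eventuallyEq_set.mpr ?_
        filter_upwards [heq t ht] with ω h
        have : |M t ω * ψt t ω| = |Q t ω - ψ ω| := by
          rw [h]; rw [abs_sub_comm]; ring_nf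
        rw [this]
      calc c * P {ω | η ≤ |M t ω|}
          = P ((ψt t) ⁻¹' {x | ε ≤ |x|} ∩ (M t) ⁻¹' {x | η ≤ |x|}) := by
            rw [hprod, hψtc]; rfl
      _ ≤ P {ω | ε * η ≤ |M t ω * ψt t ω|} := measure_mono hsubset
      _ = P {ω | ε * η ≤ |Q t ω - ψ ω|} := measure_congr hsets2
    have hMto0 : ∀ η : ℝ, 0 < η →
        Tendsto (fun t => P {ω | η ≤ |M t ω|}) atTop (nhds 0) := by
      intro η hη
      have h2 : Tendsto (fun t => c⁻¹ * P {ω | ε * η ≤ |Q t ω - ψ ω|})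
          atTop (nhds 0) := by
        have h3 := ENNReal.Tendsto.const_mul (hconv (ε * η) (by positivity))
          (Or.inr (ENNReal.inv_ne_top.mpr hc))
        simpa using h3
      refine tendsto_of_tendsto_of_tendsto_of_le_of_le' tendsto_const_nhds h2
        (Eventually.of_forall fun t => zero_le) ?_
      filter_upwards [eventually_ge_atTop (0 : ℝ)] with t ht
      calc P {ω | η ≤ |M t ω|}
          = c⁻¹ * (c * P {ω | η ≤ |M t ω|}) := by
            rw [← mul_assoc, ENNReal.inv_mul_cancel hc (measure_ne_top P _),
              one_mul]
      _ ≤ c⁻¹ * P {ω | ε * η ≤ |Q t ω - ψ ω|} :=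
            mul_le_mul_right (hMψ t ht η hη) _
    -- final step
    have hfinal : ∀ δ : ℝ, 0 < δ → P {ω | δ ≤ |ψ ω - a₀|} = 0 := by
      intro δ hδ
      have hbound : ∀ t : ℝ, 0 ≤ t → P {ω | δ ≤ |ψ ω - a₀|}
          ≤ P {ω | δ / 2 ≤ |Q t ω - ψ ω|} + P {ω | δ / (2 * K) ≤ |M t ω|} := by
        intro t ht
        have hsub : ∀ᵐ ω ∂P, ω ∈ ({ω | δ ≤ |ψ ω - a₀|} : Set Ω) →
            ω ∈ ({ω | δ / 2 ≤ |Q t ω - ψ ω|} ∪ {ω | δ / (2 * K) ≤ |M t ω|} : Set Ω) := by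
          filter_upwards [hstep2 t ht, hM0 t ht] with ω hσ hm
          intro hωδ

          by_contra hno
          simp only [Set.mem_union, Set.mem_setOf_eq, not_or, not_le] at hno
          obtain ⟨h1, h2⟩ := hno
          have hσT : |(a₀ - Q t ω) / M t ω| ≤ K := by
            apply hK
            rw [hσ]
            exact ha₀T
          have hMQ : a₀ - Q t ω = M t ω * ((a₀ - Q t ω) / M t ω) := by
            field_simp [hm]
          have hQa : |a₀ - Q t ω| < δ / 2 := by
            rw [hMQ, abs_mul]
            calc |M t ω| * |(a₀ - Q t ω) / M t ω| ≤ |M t ω| * K :=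
                  mul_le_mul_of_nonneg_left hσT (abs_nonneg _)
            _ < δ / (2 * K) * K := by
                  exact mul_lt_mul_of_pos_right h2 hK1
            _ = δ / 2 := by field_simp [hK1.ne']
          have : |ψ ω - a₀| < δ := by
            calc |ψ ω - a₀| ≤ |ψ ω - Q t ω| + |Q t ω - a₀| := abs_sub_le _ _ _
            _ = |Q t ω - ψ ω| + |a₀ - Q t ω| := by rw [abs_sub_comm (ψ ω) (Q t ω), abs_sub_comm (Q t ω) a₀]
            _ < δ / 2 + δ / 2 := add_lt_add h1 hQa
            _ = δ := by ring
          linarith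
        calc P {ω | δ ≤ |ψ ω - a₀|}
            ≤ P ({ω | δ / 2 ≤ |Q t ω - ψ ω|} ∪ {ω | δ / (2 * K) ≤ |M t ω|}) :=
              measure_mono_ae hsub
        _ ≤ _ := measure_union_le _ _
      have hlim : Tendsto (fun t => P {ω | δ / 2 ≤ |Q t ω - ψ ω|}
          + P {ω | δ / (2 * K) ≤ |M t ω|}) atTop (nhds 0) := by
        have := (hconv (δ / 2) (by positivity)).add
          (hMto0 (δ / (2 * K)) (by positivity))
        simpa using this
      have hle0 : P {ω | δ ≤ |ψ ω - a₀|} ≤ 0 :=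
        ge_of_tendsto hlim (by
          filter_upwards [eventually_ge_atTop (0 : ℝ)] with t ht
          exact hbound t ht)
      exact le_antisymm hle0 zero_le
    refine ⟨a₀, ?_⟩
    have := htail (fun ω => ψ ω - a₀) hfinal
    filter_upwards [this] with ω h
    linarith
  · rintro ⟨c, hcae⟩
    refine ⟨c, ?_⟩
    have : P {ω | ψ ω = c} = 1 := by
      rw [← measure_univ (μ := P)]
      apply measure_congr
      refine eventuallyEq_set.mpr ?_
      filter_upwards [hcae] with ω h
      simp [h]
    rw [this]
    exact one_pos
end

section
/- Let Y : [0,1] → ℝ be a right-continuous deterministic function of bounded variation whose induced Stieltjes measure has absolutely continuous part with density φ satisfying φ ≠ 0 Lebesgue-a.e. Let f : [0,1] → ℝ be Borel measurable with f ≠ 0 Lebesgue-a.e., and suppose the Lebesgue–Stieltjes integral ∫₀¹ f(t) dY_t exists and is finite. Define H : (0,1] → ℝ by H(x) = ∫_{(0,x]} f(t) dY_t. Then the image measure of Lebesgue measure on (0,1] under H is absolutely continuous with respect to Lebesgue measure on ℝ. -/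
open MeasureTheory Set Filter Topology
open scoped NNReal ENNReal

lemma aux_cdf_hasDerivAt (ρ : Measure ℝ) [IsFiniteMeasure ρ] :
    ∀ᵐ x, HasDerivAt (fun y => (ρ (Iic y)).toReal) ((ρ.rnDeriv volume x).toReal) x := by
  have hmono : Monotone (fun y => (ρ (Iic y)).toReal) := fun a b hab =>
    ENNReal.toReal_mono (measure_ne_top _ _) (measure_mono (Iic_subset_Iic.2 hab))
  have hright : ∀ x, Function.rightLim (fun y => (ρ (Iic y)).toReal) x
      = (ρ (Iic x)).toReal := by
    intro x
    refine le_antisymm ?_ (hmono.le_rightLim le_rfl)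
    have h1 : Tendsto (fun n : ℕ => ρ (Iic (x + 1/(n+1)))) atTop (𝓝 (ρ (Iic x))) := by
      have hInter : ⋂ n : ℕ, Iic (x + 1/(n+1)) = Iic x := by
        ext y
        simp only [mem_iInter, mem_Iic]
        constructor
        · intro h
          by_contra hy
          push_neg at hy
          obtain ⟨n, hn⟩ := exists_nat_one_div_lt (show (0:ℝ) < y - x by linarith)
          have := h n
          push_cast at hn this
          linarith
        · intro h n
          have : (0:ℝ) < 1/(n+1) := by positivity
          linarith
      have hmn : Antitone (fun n : ℕ => Iic (x + 1/(n+1) : ℝ)) := by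
        intro i j hij
        apply Iic_subset_Iic.2
        have hij' : (i:ℝ) ≤ (j:ℝ) := Nat.cast_le.mpr hij
        have : (1:ℝ)/(j+1) ≤ 1/(i+1) :=
          one_div_le_one_div_of_le (by positivity) (by linarith)
        linarith
      have := tendsto_measure_iInter_atTop (μ := ρ)
        (fun n => measurableSet_Iic.nullMeasurableSet) hmn ⟨0, measure_ne_top ρ _⟩
      rwa [hInter] at this
    have h2 : Tendsto (fun n : ℕ => (ρ (Iic (x + 1/(n+1)))).toReal) atTop
        (𝓝 ((ρ (Iic x)).toReal)) :=
      (ENNReal.tendsto_toReal (measure_ne_top ρ _)).comp h1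
    refine ge_of_tendsto h2 (Eventually.of_forall fun n => hmono.rightLim_le ?_)
    have : (0:ℝ) < 1/(n+1) := by positivity
    linarith
  have hmeq : hmono.stieltjesFunction.measure = ρ := by
    refine Measure.ext_of_Ioc _ _ (fun a b hab => ?_)
    rw [StieltjesFunction.measure_Ioc]
    have hsplit : ρ (Iic b) = ρ (Iic a) + ρ (Ioc a b) := by
      rw [← measure_union (Iic_disjoint_Ioc le_rfl) measurableSet_Ioc,
        Iic_union_Ioc_eq_Iic hab.le]
    have hval : hmono.stieltjesFunction b - hmono.stieltjesFunction a
        = (ρ (Ioc a b)).toReal := by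
      rw [hmono.stieltjesFunction_eq, hmono.stieltjesFunction_eq, hright, hright, hsplit,
        ENNReal.toReal_add (measure_ne_top _ _) (measure_ne_top _ _)]
      ring
    rw [hval, ENNReal.ofReal_toReal (measure_ne_top _ _)]
  have := hmono.ae_hasDerivAt
  rwa [hmeq] at this

lemma aux_null_of_image_null {H : ℝ → ℝ} {H' : ℝ → ℝ} {s : Set ℝ}
    (hd : ∀ x ∈ s, HasDerivWithinAt H (H' x) s x) (h0 : ∀ x ∈ s, H' x ≠ 0)
    (himg : volume (H '' s) = 0) : volume s = 0 := by
  rcases eq_empty_or_nonempty s with rfl | hne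
  · simp
  have key : ∀ A : ℝ →L[ℝ] ℝ, ∃ δ : ℝ≥0, δ ≠ 0 ∧ (A.det ≠ 0 →
      ∀ (t : Set ℝ) (g : ℝ → ℝ), ApproximatesLinearOn g A t δ →
        volume (g '' t) = 0 → volume t = 0) := by
    intro A
    by_cases hA : A.det = 0
    · exact ⟨1, one_ne_zero, fun h => absurd hA h⟩
    · have habs : (0:ℝ) < |A.det| := abs_pos.2 hA
      have hmlt : ((|A.det|/2).toNNReal : ℝ≥0∞) < ENNReal.ofReal |A.det| := by
        rw [show ENNReal.ofReal |A.det| = (((|A.det|).toNNReal : ℝ≥0) : ℝ≥0∞) from rfl]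
        exact_mod_cast (Real.toNNReal_lt_toNNReal_iff habs).mpr (by linarith)
      have hev := MeasureTheory.mul_le_addHaar_image_of_lt_det (μ := volume) A hmlt
      obtain ⟨δ, hδ, hδ0⟩ := (hev.and eventually_mem_nhdsWithin).exists
      refine ⟨δ, ne_of_gt hδ0, fun _ t g happrox ht0 => ?_⟩
      have := hδ t g happrox
      rw [ht0, le_zero_iff, mul_eq_zero] at this
      rcases this with h | h
      · exfalso
        have hne0 : ((|A.det|/2).toNNReal : ℝ≥0∞) ≠ 0 := by
          simp only [ne_eq, ENNReal.coe_eq_zero, Real.toNNReal_eq_zero, not_le]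
          positivity
        exact hne0 h
      · exact h
  choose r hr0 hrP using key
  obtain ⟨t, A, tclosed, st, approx, hAy⟩ :=
    exists_closed_cover_approximatesLinearOn_of_hasFDerivWithinAt H s
      (fun x => (1 : ℝ →L[ℝ] ℝ).smulRight (H' x))
      (fun x hx => (hd x hx).hasFDerivWithinAt) r hr0
  have hpieces : ∀ n, volume (s ∩ t n) = 0 := by
    intro n
    obtain ⟨y, hy, hAn⟩ := hAy hne n
    have hdet : (A n).det ≠ 0 := by
      rw [hAn, ContinuousLinearMap.smulRight_one_eq_toSpanSingleton, ContinuousLinearMap.det_toSpanSingleton]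
      exact h0 y hy
    exact hrP (A n) hdet _ _ (approx n)
      (measure_mono_null (image_mono inter_subset_left) himg)
  refine le_antisymm ?_ (zero_le)
  calc volume s ≤ volume (⋃ n, s ∩ t n) := by
        refine measure_mono (fun x hx => ?_)
        obtain ⟨n, hn⟩ := mem_iUnion.1 (st hx)
        exact mem_iUnion.2 ⟨n, hx, hn⟩
    _ = 0 := measure_iUnion_null hpieces

lemma aux_Ioc_toReal (ρ : Measure ℝ) [IsFiniteMeasure ρ] {x : ℝ} (hx : (0:ℝ) ≤ x) :
    (ρ (Ioc 0 x)).toReal = (ρ (Iic x)).toReal - (ρ (Iic 0)).toReal := by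
  have hsplit : ρ (Iic x) = ρ (Iic 0) + ρ (Ioc 0 x) := by
    rw [← measure_union (Iic_disjoint_Ioc le_rfl) measurableSet_Ioc, Iic_union_Ioc_eq_Iic hx]
  rw [hsplit, ENNReal.toReal_add (measure_ne_top _ _) (measure_ne_top _ _)]
  ring

lemma aux_integral_Ioc (μ : Measure ℝ) (f : ℝ → ℝ) {x : ℝ}
    (hi : IntegrableOn f (Ioc 0 x) μ) :
    ∫ t in Ioc (0:ℝ) x, f t ∂μ
      = (μ.withDensity (fun t => ENNReal.ofReal (f t)) (Ioc 0 x)).toReal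
        - (μ.withDensity (fun t => ENNReal.ofReal (-f t)) (Ioc 0 x)).toReal := by
  rw [withDensity_apply _ measurableSet_Ioc, withDensity_apply _ measurableSet_Ioc,
    integral_eq_lintegral_pos_part_sub_lintegral_neg_part hi]
/-- Lemma 3.4(a): Let `Y` be a right-continuous function of bounded variation on `[0,1]`,
whose induced Stieltjes (signed) measure has Jordan decomposition `μp - μn` and whose
absolutely continuous part has a density `φ` which is nonzero a.e. on `[0,1]`.
If `f` is Borel with `f ≠ 0` a.e. and `f` is integrable against the Stieltjes measure,
then the image under `H(x) = ∫_{(0,x]} f dY` of Lebesgue measure on `(0,1]` is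
absolutely continuous. -/
theorem stmt5 (Y : ℝ → ℝ) (μp μn : Measure ℝ) [IsFiniteMeasure μp] [IsFiniteMeasure μn]
    (hJordan : μp ⟂ₘ μn)
    (hY : ∀ a b : ℝ, 0 ≤ a → a ≤ b → b ≤ 1 →
      (μp (Ioc a b)).toReal - (μn (Ioc a b)).toReal = Y b - Y a)
    (φ : ℝ → ℝ)
    (hφdens : ∀ᵐ t ∂(volume.restrict (Icc (0:ℝ) 1)),
      (μp.rnDeriv volume t).toReal - (μn.rnDeriv volume t).toReal = φ t)
    (hφ : ∀ᵐ t ∂(volume.restrict (Icc (0:ℝ) 1)), φ t ≠ 0)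
    (f : ℝ → ℝ) (hf : Measurable f)
    (hf0 : ∀ᵐ t ∂(volume.restrict (Icc (0:ℝ) 1)), f t ≠ 0)
    (hfint : IntegrableOn f (Icc 0 1) μp ∧ IntegrableOn f (Icc 0 1) μn)
    (H : ℝ → ℝ)
    (hH : ∀ x ∈ Ioc (0:ℝ) 1,
      H x = (∫ t in Ioc (0:ℝ) x, f t ∂μp) - ∫ t in Ioc (0:ℝ) x, f t ∂μn) :
    ∀ B : Set ℝ, MeasurableSet B → volume B = 0 →
      volume {x ∈ Ioc (0:ℝ) 1 | H x ∈ B} = 0 := by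
  intro B hB hB0
  set νp := μp.restrict (Icc (0:ℝ) 1) with hνpdef
  set νn := μn.restrict (Icc (0:ℝ) 1) with hνndef
  have hip : Integrable f νp := hfint.1
  have hin : Integrable f νn := hfint.2
  set ρ1 := νp.withDensity (fun t => ENNReal.ofReal (f t)) with hρ1def
  set ρ2 := νp.withDensity (fun t => ENNReal.ofReal (-f t)) with hρ2def
  set ρ3 := νn.withDensity (fun t => ENNReal.ofReal (f t)) with hρ3def
  set ρ4 := νn.withDensity (fun t => ENNReal.ofReal (-f t)) with hρ4def
  haveI : IsFiniteMeasure ρ1 := isFiniteMeasure_withDensity_ofReal hip.hasFiniteIntegral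
  haveI : IsFiniteMeasure ρ2 := isFiniteMeasure_withDensity_ofReal hip.neg.hasFiniteIntegral
  haveI : IsFiniteMeasure ρ3 := isFiniteMeasure_withDensity_ofReal hin.hasFiniteIntegral
  haveI : IsFiniteMeasure ρ4 := isFiniteMeasure_withDensity_ofReal hin.neg.hasFiniteIntegral
  set G : ℝ → ℝ := fun y =>
    ((ρ1 (Iic y)).toReal - (ρ2 (Iic y)).toReal) - ((ρ3 (Iic y)).toReal - (ρ4 (Iic y)).toReal)
      - (((ρ1 (Iic 0)).toReal - (ρ2 (Iic 0)).toReal)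
          - ((ρ3 (Iic 0)).toReal - (ρ4 (Iic 0)).toReal)) with hGdef
  -- H agrees with G on Ioc 0 1
  have hHG : ∀ x ∈ Ioc (0:ℝ) 1, H x = G x := by
    intro x hx
    have hsub : Ioc (0:ℝ) x ⊆ Icc 0 1 := fun y hy => ⟨hy.1.le, hy.2.trans hx.2⟩
    have hres : ∀ μ : Measure ℝ, (μ.restrict (Icc (0:ℝ) 1)).restrict (Ioc (0:ℝ) x)
        = μ.restrict (Ioc (0:ℝ) x) := fun μ => by
      rw [Measure.restrict_restrict measurableSet_Ioc, inter_eq_left.2 hsub]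
    have hintp : IntegrableOn f (Ioc (0:ℝ) x) νp := by
      unfold νp; rw [IntegrableOn, hres]; exact hfint.1.mono_set hsub
    have hintn : IntegrableOn f (Ioc (0:ℝ) x) νn := by
      unfold νn; rw [IntegrableOn, hres]; exact hfint.2.mono_set hsub
    have hiep : ∫ t in Ioc (0:ℝ) x, f t ∂μp = ∫ t in Ioc (0:ℝ) x, f t ∂νp := by
      unfold νp; rw [hres]
    have hien : ∫ t in Ioc (0:ℝ) x, f t ∂μn = ∫ t in Ioc (0:ℝ) x, f t ∂νn := by
      unfold νn; rw [hres]
    rw [hH x hx, hiep, hien, aux_integral_Ioc νp f hintp, aux_integral_Ioc νn f hintn]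
    rw [← hρ1def, ← hρ2def, ← hρ3def, ← hρ4def, hGdef]
    rw [aux_Ioc_toReal ρ1 hx.1.le, aux_Ioc_toReal ρ2 hx.1.le, aux_Ioc_toReal ρ3 hx.1.le,
      aux_Ioc_toReal ρ4 hx.1.le]
    ring
  -- a.e. differentiability with nonzero derivative
  have hφdens' : ∀ᵐ x : ℝ, x ∈ Icc (0:ℝ) 1 →
      (μp.rnDeriv volume x).toReal - (μn.rnDeriv volume x).toReal = φ x :=
    (ae_restrict_iff' measurableSet_Icc).mp hφdens
  have hφ' : ∀ᵐ x : ℝ, x ∈ Icc (0:ℝ) 1 → φ x ≠ 0 :=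
    (ae_restrict_iff' measurableSet_Icc).mp hφ
  have hf0' : ∀ᵐ x : ℝ, x ∈ Icc (0:ℝ) 1 → f x ≠ 0 :=
    (ae_restrict_iff' measurableSet_Icc).mp hf0
  have hofReal : AEMeasurable (fun t => ENNReal.ofReal (f t)) (volume : Measure ℝ) :=
    hf.ennreal_ofReal.aemeasurable
  have hofRealNeg : AEMeasurable (fun t => ENNReal.ofReal (-f t)) (volume : Measure ℝ) :=
    hf.neg.ennreal_ofReal.aemeasurable
  have e1 : ρ1.rnDeriv volume =ᵐ[volume] fun x => ENNReal.ofReal (f x) * νp.rnDeriv volume x :=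
    Measure.rnDeriv_withDensity_left hofReal
      (Eventually.of_forall fun _ => ENNReal.ofReal_ne_top)
  have e2 : ρ2.rnDeriv volume =ᵐ[volume] fun x => ENNReal.ofReal (-f x) * νp.rnDeriv volume x :=
    Measure.rnDeriv_withDensity_left hofRealNeg
      (Eventually.of_forall fun _ => ENNReal.ofReal_ne_top)
  have e3 : ρ3.rnDeriv volume =ᵐ[volume] fun x => ENNReal.ofReal (f x) * νn.rnDeriv volume x :=
    Measure.rnDeriv_withDensity_left hofReal
      (Eventually.of_forall fun _ => ENNReal.ofReal_ne_top)
  have e4 : ρ4.rnDeriv volume =ᵐ[volume] fun x => ENNReal.ofReal (-f x) * νn.rnDeriv volume x :=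
    Measure.rnDeriv_withDensity_left hofRealNeg
      (Eventually.of_forall fun _ => ENNReal.ofReal_ne_top)
  have ep : νp.rnDeriv volume =ᵐ[volume] (Icc (0:ℝ) 1).indicator (μp.rnDeriv volume) :=
    Measure.rnDeriv_restrict μp volume measurableSet_Icc
  have en : νn.rnDeriv volume =ᵐ[volume] (Icc (0:ℝ) 1).indicator (μn.rnDeriv volume) :=
    Measure.rnDeriv_restrict μn volume measurableSet_Icc
  have hae : ∀ᵐ x : ℝ, x ∈ Ioo (0:ℝ) 1 →
      (HasDerivAt G (f x * φ x) x ∧ f x * φ x ≠ 0) := by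
    filter_upwards [aux_cdf_hasDerivAt ρ1, aux_cdf_hasDerivAt ρ2, aux_cdf_hasDerivAt ρ3,
      aux_cdf_hasDerivAt ρ4, e1, e2, e3, e4, ep, en, hφdens', hφ', hf0'] with x
      h1 h2 h3 h4 he1 he2 he3 he4 hep hen hφd hφx hfx hx
    have hxIcc : x ∈ Icc (0:ℝ) 1 := ⟨hx.1.le, hx.2.le⟩
    have hD : HasDerivAt G
        (((ρ1.rnDeriv volume x).toReal - (ρ2.rnDeriv volume x).toReal)
          - ((ρ3.rnDeriv volume x).toReal - (ρ4.rnDeriv volume x).toReal)) x := by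
      exact (((h1.sub h2).sub (h3.sub h4)).sub_const _)
    have hval : ((ρ1.rnDeriv volume x).toReal - (ρ2.rnDeriv volume x).toReal)
          - ((ρ3.rnDeriv volume x).toReal - (ρ4.rnDeriv volume x).toReal) = f x * φ x := by
      rw [he1, he2, he3, he4, hep, hen, indicator_of_mem hxIcc, indicator_of_mem hxIcc]
      rw [ENNReal.toReal_mul, ENNReal.toReal_mul, ENNReal.toReal_mul, ENNReal.toReal_mul,
        ENNReal.toReal_ofReal', ENNReal.toReal_ofReal']
      have : (max (f x) 0 - max (-f x) 0) = f x := max_zero_sub_max_neg_zero_eq_self _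
      have hprod : max (f x) 0 * (μp.rnDeriv volume x).toReal
          - max (-f x) 0 * (μp.rnDeriv volume x).toReal
          - (max (f x) 0 * (μn.rnDeriv volume x).toReal
            - max (-f x) 0 * (μn.rnDeriv volume x).toReal)
          = (max (f x) 0 - max (-f x) 0)
            * ((μp.rnDeriv volume x).toReal - (μn.rnDeriv volume x).toReal) := by ring
      rw [hprod, this, hφd hxIcc]
    rw [hval] at hD
    exact ⟨hD, mul_ne_zero (hfx hxIcc) (hφx hxIcc)⟩
  -- the good set
  set s := {x : ℝ | x ∈ Ioo (0:ℝ) 1 ∧ H x ∈ B ∧ HasDerivAt G (f x * φ x) x ∧ f x * φ x ≠ 0}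
    with hsdef
  have hs0 : volume s = 0 := by
    refine aux_null_of_image_null (H' := fun x => f x * φ x)
      (fun x hx => (hx.2.2.1).hasDerivWithinAt) (fun x hx => hx.2.2.2) ?_
    refine measure_mono_null ?_ hB0
    rintro _ ⟨x, hx, rfl⟩
    have : G x = H x := (hHG x ⟨hx.1.1, hx.1.2.le⟩).symm
    rw [this]
    exact hx.2.1
  refine measure_mono_null (?_ : _ ⊆ s ∪ ({x : ℝ | ¬ (x ∈ Ioo (0:ℝ) 1 →
      (HasDerivAt G (f x * φ x) x ∧ f x * φ x ≠ 0))} ∪ {(1:ℝ)})) ?_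
  · rintro x ⟨hx, hxB⟩
    rcases eq_or_lt_of_le hx.2 with h1 | h1
    · exact Or.inr (Or.inr (by simp [h1]))
    · have hxIoo : x ∈ Ioo (0:ℝ) 1 := ⟨hx.1, h1⟩
      by_cases hgood : HasDerivAt G (f x * φ x) x ∧ f x * φ x ≠ 0
      · exact Or.inl ⟨hxIoo, hxB, hgood⟩
      · exact Or.inr (Or.inl (fun h => hgood (h hxIoo)))
  · refine measure_union_null hs0 (measure_union_null ?_ ?_)
    · exact hae
    · exact measure_singleton 1
end

section
/- Let Y : [0,1] → ℝ be a right-continuous, strictly increasing deterministic function, and let f : [0,1] → ℝ be Borel measurable such that f ≠ 0 Lebesgue-a.e. and f is right- or left-continuous at Lebesgue-almost every point of [0,1]. Suppose the Lebesgue–Stieltjes integral ∫₀¹ f(t) dY_t exists and is finite, and define H(x) = ∫_{(0,x]} f(t) dY_t for x ∈ (0,1]. Then for every a ∈ ℝ, the set H^{−1}({a}) has Lebesgue measure zero; equivalently, the image of Lebesgue measure under H has no atoms. -/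
open MeasureTheory Set

/-- A set of reals in which every point is isolated from at least one side is countable. -/
lemma countable_of_one_sided_isolated (A : Set ℝ)
    (h : ∀ t ∈ A, (∃ u, t < u ∧ A ∩ Ioo t u = ∅) ∨ (∃ l, l < t ∧ A ∩ Ioo l t = ∅)) :
    A.Countable := by
  set Ar : Set ℝ := {t | t ∈ A ∧ ∃ q : ℚ, t < (q : ℝ) ∧ A ∩ Ioo t (q : ℝ) = ∅} with hAr
  set Al : Set ℝ := {t | t ∈ A ∧ ∃ q : ℚ, (q : ℝ) < t ∧ A ∩ Ioo (q : ℝ) t = ∅} with hAl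
  have hsub : A ⊆ Ar ∪ Al := by
    intro t ht
    rcases h t ht with ⟨u, htu, hemp⟩ | ⟨l, hlt, hemp⟩
    · obtain ⟨q, hq1, hq2⟩ := exists_rat_btwn htu
      left
      refine ⟨ht, q, hq1, ?_⟩
      apply subset_empty_iff.mp
      rw [← hemp]
      exact inter_subset_inter_right _ (Ioo_subset_Ioo_right hq2.le)
    · obtain ⟨q, hq1, hq2⟩ := exists_rat_btwn hlt
      right
      refine ⟨ht, q, hq2, ?_⟩
      apply subset_empty_iff.mp
      rw [← hemp]
      exact inter_subset_inter_right _ (Ioo_subset_Ioo_left hq1.le)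
  have hr : Ar.Countable := by
    have hch : ∀ t : Ar, ∃ q : ℚ, (t : ℝ) < (q : ℝ) ∧ A ∩ Ioo (t : ℝ) (q : ℝ) = ∅ :=
      fun t => t.2.2
    choose g hg1 hg2 using hch
    have hinj : Function.Injective g := by
      intro s t hst
      by_contra hne
      have hne' : (s : ℝ) ≠ (t : ℝ) := fun hc => hne (Subtype.ext hc)
      rcases hne'.lt_or_gt with hlt | hlt
      · have : (t : ℝ) ∈ A ∩ Ioo (s : ℝ) (g s : ℝ) := by
          refine ⟨t.2.1, hlt, ?_⟩
          rw [hst]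
          exact hg1 t
        rw [hg2 s] at this
        exact this
      · have : (s : ℝ) ∈ A ∩ Ioo (t : ℝ) (g t : ℝ) := by
          refine ⟨s.2.1, hlt, ?_⟩
          rw [← hst]
          exact hg1 s
        rw [hg2 t] at this
        exact this
    have : Countable Ar := hinj.countable
    exact Set.countable_coe_iff.mp this
  have hl : Al.Countable := by
    have hch : ∀ t : Al, ∃ q : ℚ, (q : ℝ) < (t : ℝ) ∧ A ∩ Ioo (q : ℝ) (t : ℝ) = ∅ :=
      fun t => t.2.2
    choose g hg1 hg2 using hch
    have hinj : Function.Injective g := by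
      intro s t hst
      by_contra hne
      have hne' : (s : ℝ) ≠ (t : ℝ) := fun hc => hne (Subtype.ext hc)
      rcases hne'.lt_or_gt with hlt | hlt
      · have : (s : ℝ) ∈ A ∩ Ioo (g t : ℝ) (t : ℝ) := by
          refine ⟨s.2.1, ?_, hlt⟩
          rw [← hst]
          exact hg1 s
        rw [hg2 t] at this
        exact this
      · have : (t : ℝ) ∈ A ∩ Ioo (g s : ℝ) (s : ℝ) := by
          refine ⟨t.2.1, ?_, hlt⟩
          rw [hst]
          exact hg1 t
        rw [hg2 s] at this
        exact this
    have : Countable Al := hinj.countable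
    exact Set.countable_coe_iff.mp this
  exact (hr.union hl).mono hsub

/-- Positivity of a set integral of a pointwise positive function on a set of positive
measure. -/
lemma setIntegral_pos_of_pos {μ : Measure ℝ} {s : Set ℝ} (hs : MeasurableSet s)
    (hμ : 0 < μ s) {g : ℝ → ℝ} (hg : IntegrableOn g s μ) (hpos : ∀ x ∈ s, 0 < g x) :
    0 < ∫ x in s, g x ∂μ := by
  have hnn : 0 ≤ᵐ[μ.restrict s] g :=
    (ae_restrict_iff' hs).mpr (Filter.Eventually.of_forall fun x hx => (hpos x hx).le)
  rw [setIntegral_pos_iff_support_of_nonneg_ae hnn hg]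
  have : s ⊆ Function.support g ∩ s := fun x hx => ⟨(hpos x hx).ne', hx⟩
  exact lt_of_lt_of_le hμ (measure_mono this)

/-- Lemma 3.4(b): Let `Y` be a right-continuous strictly increasing function (viewed as a
Stieltjes function), and let `f` be Borel, nonzero a.e. on `[0,1]`, right- or
left-continuous at a.e. point of `[0,1]`, and Stieltjes-integrable. Then the image of
Lebesgue measure on `(0,1]` under `H(x) = ∫_{(0,x]} f dY` has no atoms. -/
theorem stmt6 (Y : StieltjesFunction ℝ) (hY : StrictMonoOn Y (Icc (0:ℝ) 1))
    (f : ℝ → ℝ) (hf : Measurable f)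
    (hf0 : ∀ᵐ t ∂(volume.restrict (Icc (0:ℝ) 1)), f t ≠ 0)
    (hfcont : ∀ᵐ t ∂(volume.restrict (Icc (0:ℝ) 1)),
      ContinuousWithinAt f (Ici t) t ∨ ContinuousWithinAt f (Iic t) t)
    (hfint : IntegrableOn f (Icc 0 1) Y.measure)
    (H : ℝ → ℝ)
    (hH : ∀ x ∈ Ioc (0:ℝ) 1, H x = ∫ t in Ioc (0:ℝ) x, f t ∂Y.measure) :
    ∀ a : ℝ, volume {x ∈ Ioc (0:ℝ) 1 | H x = a} = 0 := by
  intro a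
  set S : Set ℝ := {x ∈ Ioc (0:ℝ) 1 | H x = a} with hS
  -- the difference formula for H
  have hdiff : ∀ t ∈ Ioc (0:ℝ) 1, ∀ s ∈ Ioc (0:ℝ) 1, t ≤ s →
      H s - H t = ∫ u in Ioc t s, f u ∂Y.measure := by
    intro t ht s hs hts
    rw [hH t ht, hH s hs]
    have hunion : Ioc (0:ℝ) t ∪ Ioc t s = Ioc (0:ℝ) s := Ioc_union_Ioc_eq_Ioc ht.1.le hts
    have hdisj : Disjoint (Ioc (0:ℝ) t) (Ioc t s) := Ioc_disjoint_Ioc_of_le le_rfl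
    have h1 : IntegrableOn f (Ioc (0:ℝ) t) Y.measure :=
      hfint.mono_set ((Ioc_subset_Icc_self).trans (Icc_subset_Icc le_rfl ht.2))
    have h2 : IntegrableOn f (Ioc t s) Y.measure :=
      hfint.mono_set ((Ioc_subset_Icc_self).trans (Icc_subset_Icc ht.1.le hs.2))
    rw [← hunion, setIntegral_union hdisj measurableSet_Ioc h1 h2]
    ring
  -- positivity of Y.measure on subintervals of [0,1]
  have hYpos : ∀ t s : ℝ, 0 ≤ t → t < s → s ≤ 1 → 0 < Y.measure (Ioc t s) := by
    intro t s ht hts hs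
    rw [Y.measure_Ioc]
    have : Y t < Y s := hY ⟨ht, hts.le.trans hs⟩ ⟨ht.trans hts.le, hs⟩ hts
    simp [ENNReal.ofReal_pos, sub_pos, this]
  -- if f > 0 on Ioc t s then H t < H s
  have hmono : ∀ t ∈ Ioc (0:ℝ) 1, ∀ s ∈ Ioc (0:ℝ) 1, t < s →
      (∀ u ∈ Ioc t s, f u ≠ 0 → True) → (∀ u ∈ Ioc t s, 0 < f u) → H t < H s := by
    intro t ht s hs hts _ hpos
    have := hdiff t ht s hs hts.le
    have hint : IntegrableOn f (Ioc t s) Y.measure :=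
      hfint.mono_set ((Ioc_subset_Icc_self).trans (Icc_subset_Icc ht.1.le hs.2))
    have hp : 0 < ∫ u in Ioc t s, f u ∂Y.measure :=
      setIntegral_pos_of_pos measurableSet_Ioc (hYpos t s ht.1.le hts hs.2) hint hpos
    linarith
  have hanti : ∀ t ∈ Ioc (0:ℝ) 1, ∀ s ∈ Ioc (0:ℝ) 1, t < s →
      (∀ u ∈ Ioc t s, f u < 0) → H s < H t := by
    intro t ht s hs hts hneg
    have := hdiff t ht s hs hts.le
    have hint : IntegrableOn (fun u => -f u) (Ioc t s) Y.measure :=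
      (hfint.mono_set ((Ioc_subset_Icc_self).trans (Icc_subset_Icc ht.1.le hs.2))).neg
    have hp : 0 < ∫ u in Ioc t s, -f u ∂Y.measure :=
      setIntegral_pos_of_pos measurableSet_Ioc (hYpos t s ht.1.le hts hs.2) hint
        (fun u hu => neg_pos.mpr (hneg u hu))
    rw [integral_neg] at hp
    linarith
  -- the good set
  set P : ℝ → Prop := fun t => f t ≠ 0 ∧
    (ContinuousWithinAt f (Ici t) t ∨ ContinuousWithinAt f (Iic t) t) with hP
  have hae : ∀ᵐ t ∂(volume.restrict (Icc (0:ℝ) 1)), P t := hf0.and hfcont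
  have hbadnull : volume ({t | ¬ P t} ∩ Icc (0:ℝ) 1) = 0 := by
    have := (ae_iff.mp hae)
    rwa [Measure.restrict_apply' measurableSet_Icc] at this
  -- S ∩ {P} is countable
  have hcount : (S ∩ {t | P t}).Countable := by
    apply countable_of_one_sided_isolated
    rintro t ⟨⟨htI, htH⟩, hft0, htcont⟩
    rcases htcont with hc | hc
    · -- right-continuous case: f has constant sign on [t, u) for some u > t
      rcases hft0.lt_or_gt with hneg | hpos
      · -- f t < 0
        have hev : ∀ᶠ u in nhdsWithin t (Ici t), f u < 0 :=
          hc.eventually (eventually_lt_nhds hneg)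
        obtain ⟨u, hu, hsub⟩ := mem_nhdsGE_iff_exists_Ico_subset.mp hev
        left
        refine ⟨u, hu, ?_⟩
        apply eq_empty_iff_forall_notMem.mpr
        rintro s ⟨⟨⟨hsI, hsH⟩, _⟩, hts, hsu⟩
        have : H s < H t := hanti t htI s hsI hts
          (fun v hv => hsub ⟨hv.1.le, lt_of_le_of_lt hv.2 hsu⟩)
        rw [htH, hsH] at this
        exact lt_irrefl a this
      · -- f t > 0
        have hev : ∀ᶠ u in nhdsWithin t (Ici t), 0 < f u :=
          hc.eventually (eventually_gt_nhds hpos)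
        obtain ⟨u, hu, hsub⟩ := mem_nhdsGE_iff_exists_Ico_subset.mp hev
        left
        refine ⟨u, hu, ?_⟩
        apply eq_empty_iff_forall_notMem.mpr
        rintro s ⟨⟨⟨hsI, hsH⟩, _⟩, hts, hsu⟩
        have : H t < H s := hmono t htI s hsI hts (fun _ _ _ => trivial)
          (fun v hv => hsub ⟨hv.1.le, lt_of_le_of_lt hv.2 hsu⟩)
        rw [htH, hsH] at this
        exact lt_irrefl a this
    · -- left-continuous case
      rcases hft0.lt_or_gt with hneg | hpos
      · have hev : ∀ᶠ u in nhdsWithin t (Iic t), f u < 0 :=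
          hc.eventually (eventually_lt_nhds hneg)
        obtain ⟨l, hl, hsub⟩ := mem_nhdsLE_iff_exists_Ioc_subset.mp hev
        right
        refine ⟨l, hl, ?_⟩
        apply eq_empty_iff_forall_notMem.mpr
        rintro s ⟨⟨⟨hsI, hsH⟩, _⟩, hls, hst⟩
        have : H t < H s := hanti s hsI t htI hst
          (fun v hv => hsub ⟨lt_trans hls hv.1, hv.2⟩)
        rw [htH, hsH] at this
        exact lt_irrefl a this
      · have hev : ∀ᶠ u in nhdsWithin t (Iic t), 0 < f u :=
          hc.eventually (eventually_gt_nhds hpos)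
        obtain ⟨l, hl, hsub⟩ := mem_nhdsLE_iff_exists_Ioc_subset.mp hev
        right
        refine ⟨l, hl, ?_⟩
        apply eq_empty_iff_forall_notMem.mpr
        rintro s ⟨⟨⟨hsI, hsH⟩, _⟩, hls, hst⟩
        have : H s < H t := hmono s hsI t htI hst (fun _ _ _ => trivial)
          (fun v hv => hsub ⟨lt_trans hls hv.1, hv.2⟩)
        rw [htH, hsH] at this
        exact lt_irrefl a this
  -- conclude
  have hsplit : S ⊆ (S ∩ {t | P t}) ∪ ({t | ¬ P t} ∩ Icc (0:ℝ) 1) := by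
    intro x hx
    by_cases hpx : P x
    · exact Or.inl ⟨hx, hpx⟩
    · exact Or.inr ⟨hpx, Ioc_subset_Icc_self hx.1⟩
  exact measure_mono_null hsplit (measure_union_null (hcount.measure_zero _) hbadnull)
end
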